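/- arXiv:1209.4173 — 2 statements merged into one kernel-verified Lean document; each statement's English description precedes it below -/
import Mathlib

section
/- For all real numbers x, y, z, every real v with 0 < v ≤ 1/4, and every r with 1 ≤ r ≤ 2, one has |(x+y+z)² · 1_{|x+y+z| ≤ v} − x² − 2xy| ≤ 2v²·1_{z ≠ 0} + 6|xy|·1_{|x| > v/2} + 6x²·1_{|x| > v/2} + 16 v^{2−r} |y|^r. -/
open Real

lemma lemA (v t r : ℝ) (hv : 0 < v) (hr1 : 1 ≤ r) (hr2 : r ≤ 2)
    (ht0 : 0 ≤ t) (ht : t ≤ 2 * v) : t * t ≤ 2 * v ^ (2 - r) * t ^ r := by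
  rcases eq_or_lt_of_le ht0 with h0 | h0
  · rw [← h0, Real.zero_rpow (by linarith : r ≠ 0)]
    simp
  · have h1 : t ^ (2 - r) ≤ (2 * v) ^ (2 - r) :=
      Real.rpow_le_rpow ht0 ht (by linarith)
    have h2 : (2 * v) ^ (2 - r) = 2 ^ (2 - r) * v ^ (2 - r) :=
      Real.mul_rpow (by norm_num) hv.le
    have h3 : (2:ℝ) ^ (2 - r) ≤ 2 := by
      calc (2:ℝ) ^ (2 - r) ≤ 2 ^ (1:ℝ) :=
            Real.rpow_le_rpow_of_exponent_le (by norm_num) (by linarith)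
        _ = 2 := Real.rpow_one 2
    have h4 : t ^ (2 - r) * t ^ r = t * t := by
      rw [← Real.rpow_add h0]
      have he : 2 - r + r = (2:ℝ) := by ring
      rw [he, show (2:ℝ) = ((2:ℕ):ℝ) by norm_num, Real.rpow_natCast]
      ring
    have htr : 0 ≤ t ^ r := Real.rpow_nonneg ht0 r
    have hvr : 0 ≤ v ^ (2 - r) := Real.rpow_nonneg hv.le _
    calc t * t = t ^ (2 - r) * t ^ r := h4.symm
      _ ≤ (2 * v) ^ (2 - r) * t ^ r := mul_le_mul_of_nonneg_right h1 htr
      _ = 2 ^ (2 - r) * v ^ (2 - r) * t ^ r := by rw [h2]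
      _ ≤ 2 * v ^ (2 - r) * t ^ r := by
          have := mul_le_mul_of_nonneg_right h3 (mul_nonneg hvr htr)
          linarith

lemma lemB (v t r : ℝ) (hv : 0 < v) (hr1 : 1 ≤ r) (hr2 : r ≤ 2)
    (ht : v / 2 ≤ t) : v * t ≤ 2 * v ^ (2 - r) * t ^ r := by
  have ht0 : 0 < t := lt_of_lt_of_le (by linarith) ht
  have h1 : v ^ (r - 1) ≤ (2 * t) ^ (r - 1) :=
    Real.rpow_le_rpow hv.le (by linarith) (by linarith)
  have h2 : (2 * t) ^ (r - 1) = 2 ^ (r - 1) * t ^ (r - 1) :=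
    Real.mul_rpow (by norm_num) ht0.le
  have h3 : (2:ℝ) ^ (r - 1) ≤ 2 := by
    calc (2:ℝ) ^ (r - 1) ≤ 2 ^ (1:ℝ) :=
          Real.rpow_le_rpow_of_exponent_le (by norm_num) (by linarith)
      _ = 2 := Real.rpow_one 2
  have h4 : v ^ (2 - r) * v ^ (r - 1) = v := by
    rw [← Real.rpow_add hv]
    have he : 2 - r + (r - 1) = (1:ℝ) := by ring
    rw [he, Real.rpow_one]
  have h5 : t ^ (r - 1) * t = t ^ r := by
    calc t ^ (r - 1) * t = t ^ (r - 1) * t ^ (1:ℝ) := by rw [Real.rpow_one]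
      _ = t ^ (r - 1 + 1) := (Real.rpow_add ht0 _ _).symm
      _ = t ^ r := by norm_num
  have htr1 : 0 ≤ t ^ (r - 1) := Real.rpow_nonneg ht0.le _
  have hvr : 0 ≤ v ^ (2 - r) := Real.rpow_nonneg hv.le _
  have h6 : v ^ (r - 1) ≤ 2 * t ^ (r - 1) := by nlinarith
  calc v * t = v ^ (2 - r) * v ^ (r - 1) * t := by rw [h4]
    _ ≤ v ^ (2 - r) * (2 * t ^ (r - 1)) * t := by
        have := mul_le_mul_of_nonneg_right (mul_le_mul_of_nonneg_left h6 hvr) ht0.le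
        linarith
    _ = 2 * v ^ (2 - r) * t ^ r := by rw [← h5]; ring

set_option maxHeartbeats 1000000 in
theorem stmt_0 (x y z v r : ℝ) (hv0 : 0 < v) (hv : v ≤ 1/4)
    (hr1 : 1 ≤ r) (hr2 : r ≤ 2) :
    |(x + y + z)^2 * (if |x + y + z| ≤ v then (1:ℝ) else 0) - x^2 - 2*x*y| ≤
      2 * v^2 * (if z ≠ 0 then (1:ℝ) else 0)
      + 6 * |x*y| * (if v/2 < |x| then (1:ℝ) else 0)
      + 6 * x^2 * (if v/2 < |x| then (1:ℝ) else 0)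
      + 16 * v ^ (2 - r) * |y| ^ r := by
  have hT : 0 ≤ v ^ (2 - r) * |y| ^ r :=
    mul_nonneg (Real.rpow_nonneg hv0.le _) (Real.rpow_nonneg (abs_nonneg y) _)
  have hxyab : |x * y| = |x| * |y| := abs_mul x y
  have hxy1 : x * y ≤ |x * y| := le_abs_self _
  have hxy2 : -(x * y) ≤ |x * y| := neg_le_abs _
  have hax : 0 ≤ |x| := abs_nonneg x
  have hay : 0 ≤ |y| := abs_nonneg y
  have hsx : |x| * |x| = x * x := abs_mul_abs_self x
  have hxsq : (0:ℝ) ≤ x ^ 2 := sq_nonneg x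
  have hsy : |y| * |y| = y * y := abs_mul_abs_self y
  by_cases hS : |x + y + z| ≤ v
  · rw [if_pos hS]
    obtain ⟨hS1, hS2⟩ := abs_le.mp hS
    have hSsq : (x + y + z) ^ 2 ≤ v ^ 2 := by nlinarith
    have hS0 : 0 ≤ (x + y + z) ^ 2 := sq_nonneg _
    by_cases hx : v / 2 < |x|
    · rw [if_pos hx]
      have hind : (0:ℝ) ≤ if z ≠ 0 then (1:ℝ) else 0 := by
        by_cases h : z = 0 <;> simp [h]
      have hIz : 0 ≤ 2 * v ^ 2 * (if z ≠ 0 then (1:ℝ) else 0) :=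
        mul_nonneg (by positivity) hind
      have hv4 : v ^ 2 ≤ 4 * x ^ 2 := by nlinarith
      rw [abs_le]
      constructor
      · linarith
      · linarith
    · push_neg at hx
      rw [if_neg (not_lt.mpr hx)]
      have hx2 : x ^ 2 ≤ (v / 2) ^ 2 := by nlinarith
      by_cases hz : z = 0
      · subst hz
        rw [if_neg (by simp)]
        have hE : (x + y + 0) ^ 2 * 1 - x ^ 2 - 2 * x * y = y ^ 2 := by ring
        rw [hE, abs_of_nonneg (sq_nonneg y)]
        have htri := abs_add_le (x + y + 0) (-x)
        rw [abs_neg] at htri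
        have he : x + y + 0 + -x = y := by ring
        rw [he] at htri
        have habs : |x + y + 0| ≤ v := abs_le.mpr ⟨hS1, hS2⟩
        have hy2v : |y| ≤ 2 * v := by linarith
        have hA := lemA v |y| r hv0 hr1 hr2 hay hy2v
        linarith
      · rw [if_pos hz]
        by_cases hy : |y| ≤ 2 * v
        · have hA := lemA v |y| r hv0 hr1 hr2 hay hy
          have h1 := sq_nonneg (x - y)
          have h2 := sq_nonneg (x + y)
          have hy2 : y ^ 2 ≤ 2 * (v ^ (2 - r) * |y| ^ r) := by linarith [hsy, hA]
          rw [abs_le]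
          constructor
          · linarith
          · linarith
        · push_neg at hy
          have hB := lemB v |y| r hv0 hr1 hr2 (by linarith)
          have hxyv : |x| * |y| ≤ (v / 2) * |y| :=
            mul_le_mul_of_nonneg_right hx hay
          have hvsq : (0:ℝ) ≤ v ^ 2 := sq_nonneg v
          rw [abs_le]
          constructor
          · linarith
          · linarith
  · rw [if_neg hS]
    push_neg at hS
    by_cases hx : v / 2 < |x|
    · rw [if_pos hx]
      have hind : (0:ℝ) ≤ if z ≠ 0 then (1:ℝ) else 0 := by
        by_cases h : z = 0 <;> simp [h]
      have hIz : 0 ≤ 2 * v ^ 2 * (if z ≠ 0 then (1:ℝ) else 0) :=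
        mul_nonneg (by positivity) hind
      rw [abs_le]
      constructor
      · linarith
      · linarith
    · push_neg at hx
      rw [if_neg (not_lt.mpr hx)]
      have hx2 : x ^ 2 ≤ (v / 2) ^ 2 := by nlinarith
      have htri := abs_add_le x (y + z)
      have he : x + (y + z) = x + y + z := by ring
      rw [he] at htri
      have hyz : v / 2 < |y + z| := by linarith
      have hxyv : |x| * |y| ≤ (v / 2) * |y| :=
        mul_le_mul_of_nonneg_right hx hay
      by_cases hz : z = 0
      · subst hz
        rw [if_neg (by simp)]
        have hyv : v / 2 ≤ |y| := by
          have hy0 : |y + 0| = |y| := by norm_num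
          rw [hy0] at hyz
          linarith
        have hB := lemB v |y| r hv0 hr1 hr2 hyv
        have hvv : v * v ≤ 2 * (v * |y|) := by nlinarith
        rw [abs_le]
        constructor
        · linarith
        · linarith
      · rw [if_pos hz]
        by_cases hy : |y| ≤ v
        · have hvy : v * |y| ≤ v * v := mul_le_mul_of_nonneg_left hy hv0.le
          rw [abs_le]
          constructor
          · linarith
          · linarith
        · push_neg at hy
          have hB := lemB v |y| r hv0 hr1 hr2 (by linarith)
          have hvsq : (0:ℝ) ≤ v ^ 2 := sq_nonneg v
          rw [abs_le]
          constructor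
          · linarith
          · linarith
end

section
/- Let a > 0, u₀ ≥ 1, and let h be the even function with h(u) = a for 0 ≤ u ≤ u₀ and h(u) = a·e^{−(u−u₀)³} for u > u₀. Let H(x) = (1/(2π)) ∫ e^{−iux} h(u) du. Then there is a constant K (independent of a, u₀) such that for all x ≠ 0: |H(x)| ≤ K a ( u₀·1_{|x| ≤ 1/u₀} + (1/|x|)·1_{1/u₀ < |x| ≤ 1} + 1_{|x| > 1} ). -/
open MeasureTheory

open Set Real in
private lemma integrable_exp_const_sub_abs (c : ℝ) :
    Integrable (fun u : ℝ => Real.exp (c - |u|)) := by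
  have hfun : (fun u : ℝ => Real.exp (c - |u|))
      = fun u => Real.exp c * Real.exp (-|u|) := by
    funext u; rw [← Real.exp_add]; ring_nf
  rw [hfun]
  apply Integrable.const_mul
  have h1 : IntegrableOn (fun u : ℝ => Real.exp (-|u|)) (Iic (0:ℝ)) := by
    refine (integrableOn_congr_fun (g := Real.exp) ?_ measurableSet_Iic).mpr
      (integrableOn_exp_Iic 0)
    intro u hu
    simp only [Set.mem_Iic] at hu
    show Real.exp (-|u|) = Real.exp u
    rw [abs_of_nonpos hu, neg_neg]
  have h2 : IntegrableOn (fun u : ℝ => Real.exp (-|u|)) (Ioi (0:ℝ)) := by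
    refine (integrableOn_congr_fun (g := fun u => Real.exp (-1 * u)) ?_ measurableSet_Ioi).mpr
      (exp_neg_integrableOn_Ioi 0 one_pos)
    intro u hu
    simp only [Set.mem_Ioi] at hu
    show Real.exp (-|u|) = Real.exp (-1 * u)
    rw [abs_of_pos hu]; ring_nf
  have := h1.union h2
  rwa [Set.Iic_union_Ioi, integrableOn_univ] at this

set_option maxHeartbeats 1000000 in
theorem stmt_6 :
    ∃ K : ℝ, 0 < K ∧
      ∀ (a u₀ : ℝ) (h : ℝ → ℝ) (H : ℝ → ℂ),
        0 < a → 1 ≤ u₀ →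
        (∀ u, h (-u) = h u) →
        (∀ u : ℝ, 0 ≤ u → h u = if u ≤ u₀ then a else a * Real.exp (-(u - u₀)^3)) →
        (∀ x : ℝ, H x = (1 / (2 * Real.pi)) *
          ∫ u : ℝ, Complex.exp (-(Complex.I * u * x)) * (h u : ℂ)) →
        ∀ x : ℝ, x ≠ 0 →
          ‖H x‖ ≤ K * a * ((if |x| ≤ 1/u₀ then u₀ else 0)
            + (if 1/u₀ < |x| ∧ |x| ≤ 1 then 1/|x| else 0)
            + (if 1 < |x| then (1:ℝ) else 0)) := by
  refine ⟨2, by norm_num, ?_⟩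
  intro a u₀ h H ha hu₀ heven hspec hH x hx
  have hx' : (0:ℝ) < |x| := abs_pos.mpr hx
  have hu₀0 : (0:ℝ) < u₀ := by linarith
  -- explicit formula for h
  have hval : ∀ u, h u = if |u| ≤ u₀ then a else a * Real.exp (-(|u| - u₀)^3) := by
    intro u
    rcases le_or_gt 0 u with hu | hu
    · rw [hspec u hu, abs_of_nonneg hu]
    · rw [← heven u, hspec (-u) (by linarith), abs_of_neg hu]
  have hpos : ∀ u, 0 ≤ h u := by
    intro u; rw [hval u]; split <;> positivity
  have hmaj : ∀ u, h u ≤ a * Real.exp (1 + u₀ - |u|) := by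
    intro u
    rw [hval u]
    split_ifs with hc
    · have h1 : (1:ℝ) ≤ Real.exp (1 + u₀ - |u|) :=
        Real.one_le_exp (by linarith)
      nlinarith
    · push_neg at hc
      have ht : (0:ℝ) ≤ |u| - u₀ := by linarith
      have h1 : -(|u| - u₀)^3 ≤ 1 + u₀ - |u| := by
        nlinarith [mul_nonneg ht (sq_nonneg (|u| - u₀ - 1)), sq_nonneg (2*(|u| - u₀) - 1)]
      have := Real.exp_le_exp.mpr h1
      nlinarith [Real.exp_pos (-(|u| - u₀)^3)]
  have hmeas : Measurable h := by
    have : h = fun u => if |u| ≤ u₀ then a else a * Real.exp (-(|u| - u₀)^3) :=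
      funext hval
    rw [this]
    exact Measurable.ite (measurableSet_le (by fun_prop) measurable_const)
      measurable_const (by fun_prop)
  set g : ℝ → ℂ := fun u => Complex.exp (-(Complex.I * u * x)) * (h u : ℂ) with hg
  have hnorm : ∀ u, ‖g u‖ = h u := by
    intro u
    rw [hg]
    simp only [norm_mul, Complex.norm_exp, Complex.norm_real, Real.norm_eq_abs]
    rw [abs_of_nonneg (hpos u)]
    simp [Complex.mul_re, Complex.I_re, Complex.I_im]
  have hgmeas : AEStronglyMeasurable g volume := by
    have : Measurable g := by
      apply Measurable.mul
      · fun_prop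
      · exact Complex.measurable_ofReal.comp hmeas
    exact this.aestronglyMeasurable
  have hMint : Integrable (fun u : ℝ => a * Real.exp (1 + u₀ - |u|)) :=
    (integrable_exp_const_sub_abs (1 + u₀)).const_mul a
  have hInt : Integrable g := by
    refine Integrable.mono' hMint hgmeas ?_
    filter_upwards with u
    rw [hnorm u]; exact hmaj u
  set s : Set ℝ := Set.Icc (-u₀) u₀ with hs_def
  have hs : MeasurableSet s := measurableSet_Icc
  have hsplit : (∫ u, g u) = (∫ u in s, g u) + ∫ u in sᶜ, g u :=
    (integral_add_compl hs hInt).symm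
  -- interval part: exact value and two bounds
  have hc : -Complex.I * (x:ℂ) ≠ 0 := by
    simp [Complex.I_ne_zero, Complex.ofReal_eq_zero, hx]
  have hAval : (∫ u in s, g u) = (a:ℂ) *
      ((Complex.exp (-Complex.I * x * u₀) - Complex.exp (-Complex.I * x * (-u₀ : ℝ)))
        / (-Complex.I * x)) := by
    have h1 : Set.EqOn g (fun u : ℝ => (a:ℂ) * Complex.exp ((-Complex.I * x) * u)) s := by
      intro u hu
      rw [hg]
      simp only
      rw [hval u, if_pos (abs_le.mpr ⟨hu.1, hu.2⟩), mul_comm]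
      congr 2
      push_cast; ring
    rw [setIntegral_congr_fun hs h1, integral_Icc_eq_integral_Ioc,
      ← intervalIntegral.integral_of_le (by linarith : -u₀ ≤ u₀),
      intervalIntegral.integral_const_mul,
      integral_exp_mul_complex hc]
    try push_cast
    try ring_nf
  have hexp1 : ∀ r : ℝ, ‖Complex.exp (-Complex.I * (x:ℂ) * (r:ℂ))‖ = 1 := by
    intro r
    rw [Complex.norm_exp]
    simp [Complex.mul_re, Complex.I_re, Complex.I_im]
  have hA2 : ‖∫ u in s, g u‖ ≤ 2 * a / |x| := by
    rw [hAval, norm_mul, norm_div]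
    have hna : ‖(a:ℂ)‖ = a := by
      rw [Complex.norm_real, Real.norm_eq_abs, abs_of_pos ha]
    have hden : ‖-Complex.I * (x:ℂ)‖ = |x| := by
      simp [Complex.norm_real]
    rw [hna, hden]
    have hnum : ‖Complex.exp (-Complex.I * x * u₀) -
        Complex.exp (-Complex.I * x * (-u₀ : ℝ))‖ ≤ 2 := by
      calc ‖Complex.exp (-Complex.I * x * u₀) - Complex.exp (-Complex.I * x * (-u₀ : ℝ))‖
          ≤ ‖Complex.exp (-Complex.I * (x:ℂ) * (u₀:ℝ))‖ +
            ‖Complex.exp (-Complex.I * (x:ℂ) * ((-u₀ : ℝ):ℂ))‖ := norm_sub_le _ _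
        _ = 2 := by rw [hexp1 u₀, hexp1 (-u₀)]; norm_num
    rw [← mul_div_assoc, div_le_div_iff₀ (by positivity) hx']
    nlinarith [mul_pos ha hx']
  have hA1 : ‖∫ u in s, g u‖ ≤ a * (2 * u₀) := by
    have hsvol : volume s < ⊤ := by
      rw [hs_def, Real.volume_Icc]
      exact ENNReal.ofReal_lt_top
    have hb : ∀ u ∈ s, ‖g u‖ ≤ a := by
      intro u hu
      rw [hnorm u, hval u, if_pos (abs_le.mpr ⟨hu.1, hu.2⟩)]
    have := norm_setIntegral_le_of_norm_le_const hsvol hb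
    rw [hs_def] at this ⊢
    rw [measureReal_def, Real.volume_Icc] at this
    rw [ENNReal.toReal_ofReal (by linarith)] at this
    calc ‖∫ u in Set.Icc (-u₀) u₀, g u‖ ≤ a * (u₀ - -u₀) := this
      _ = a * (2 * u₀) := by ring
  -- tail part
  have hB : ‖∫ u in sᶜ, g u‖ ≤ 2 * a * Real.exp 1 := by
    have hle : ‖∫ u in sᶜ, g u‖ ≤ ∫ u in sᶜ, a * Real.exp (1 + u₀ - |u|) := by
      refine norm_integral_le_of_norm_le hMint.integrableOn ?_
      filter_upwards with u
      rw [hnorm u]; exact hmaj u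
    refine hle.trans ?_
    have hcompl : sᶜ = Set.Iio (-u₀) ∪ Set.Ioi u₀ := by
      rw [hs_def]
      ext u
      simp only [Set.mem_compl_iff, Set.mem_Icc, Set.mem_union, Set.mem_Iio, Set.mem_Ioi,
        not_and_or, not_le]
    have e1 : (∫ u in Set.Ioi u₀, a * Real.exp (1 + u₀ - |u|)) = a * Real.exp 1 := by
      rw [setIntegral_congr_fun (g := fun u => (a * Real.exp (1 + u₀)) * Real.exp (-u))
        measurableSet_Ioi ?_]
      · rw [integral_const_mul, integral_exp_neg_Ioi, mul_assoc, ← Real.exp_add]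
        norm_num
      · intro u hu
        simp only [Set.mem_Ioi] at hu
        show a * Real.exp (1 + u₀ - |u|) = a * Real.exp (1 + u₀) * Real.exp (-u)
        rw [abs_of_pos (by linarith), mul_assoc, ← Real.exp_add, sub_eq_add_neg]
    have e2 : (∫ u in Set.Iio (-u₀), a * Real.exp (1 + u₀ - |u|)) = a * Real.exp 1 := by
      rw [setIntegral_congr_set Iio_ae_eq_Iic]
      have h3 := integral_comp_neg_Iic (-u₀) (fun u : ℝ => a * Real.exp (1 + u₀ - |u|))
      simp only [abs_neg, neg_neg] at h3
      rw [h3]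
      exact e1
    rw [hcompl, setIntegral_union (Set.Iio_disjoint_Ici (by linarith)|>.mono_right
        Set.Ioi_subset_Ici_self) measurableSet_Ioi hMint.integrableOn hMint.integrableOn,
      e1, e2]
    linarith [Real.exp_pos (1:ℝ)]
  -- combine
  have hπ : (3:ℝ) < Real.pi := Real.pi_gt_three
  have hπ0 : (0:ℝ) < Real.pi := by linarith
  have he3 : Real.exp 1 < 3 := by
    have := Real.exp_one_lt_d9; linarith
  have he0 : (0:ℝ) < Real.exp 1 := Real.exp_pos 1
  have hHx : ‖H x‖ = 1 / (2 * Real.pi) * ‖∫ u, g u‖ := by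
    rw [hH x, norm_mul]
    congr 1
    rw [norm_div, norm_one, norm_mul]
    simp only [Complex.norm_real, Real.norm_eq_abs, Complex.norm_ofNat]
    rw [abs_of_pos hπ0]
  have hN0 : (0:ℝ) ≤ ‖∫ u, g u‖ := norm_nonneg _
  have hNsplit : ‖∫ u, g u‖ ≤ ‖∫ u in s, g u‖ + ‖∫ u in sᶜ, g u‖ := by
    rw [hsplit]; exact norm_add_le _ _
  have hinv : 1 / (2 * Real.pi) ≤ 1 / 6 := by
    rw [div_le_div_iff₀ (by linarith) (by norm_num)]
    linarith
  have hN1 : ‖∫ u, g u‖ ≤ a * (2 * u₀) + 2 * a * Real.exp 1 := by linarith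
  have hN2 : ‖∫ u, g u‖ ≤ 2 * a / |x| + 2 * a * Real.exp 1 := by linarith
  set N : ℝ := ‖∫ u, g u‖ with hNdef
  clear_value N
  clear hNsplit hA1 hA2 hB hsplit hAval hInt hNdef
  clear hgmeas hnorm hexp1 hc hval hmaj hpos hmeas heven hspec hH hg hs_def hs
  clear hMint g s h
  by_cases h1 : |x| ≤ 1 / u₀
  · have h2 : ¬ (1/u₀ < |x| ∧ |x| ≤ 1) := by
      rintro ⟨h2a, _⟩; linarith
    have h3 : ¬ (1 < |x|) := by
      have : (1:ℝ)/u₀ ≤ 1 := by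
        rw [div_le_one hu₀0]; linarith
      push_neg; linarith
    rw [if_pos h1, if_neg h2, if_neg h3]
    rw [hHx]
    have step : 1 / (2 * Real.pi) * N ≤ 1/6 * (a * (2 * u₀) + 2 * a * Real.exp 1) := by
      calc 1 / (2 * Real.pi) * N ≤ 1/6 * N := by nlinarith
        _ ≤ 1/6 * (a * (2 * u₀) + 2 * a * Real.exp 1) := by linarith
    refine step.trans ?_
    have : a * Real.exp 1 ≤ 3 * (a * u₀) := by nlinarith
    nlinarith
  · push_neg at h1
    by_cases h2 : |x| ≤ 1
    · rw [if_neg (not_le.mpr h1), if_pos ⟨h1, h2⟩, if_neg (not_lt.mpr h2)]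
      rw [hHx]
      have step : 1 / (2 * Real.pi) * N ≤
          1/6 * (2 * a / |x| + 2 * a * Real.exp 1) := by
        calc 1 / (2 * Real.pi) * N ≤ 1/6 * N := by nlinarith
          _ ≤ 1/6 * (2 * a / |x| + 2 * a * Real.exp 1) := by linarith
      refine step.trans ?_
      have hinvx : (1:ℝ) ≤ 1 / |x| := by
        rw [le_div_iff₀ hx']; linarith
      have h5 : a * Real.exp 1 ≤ 3 * (a * (1/|x|)) := by nlinarith
      have h6 : 2 * a / |x| = 2 * (a * (1/|x|)) := by ring
      rw [h6]
      have h7 : (0:ℝ) < a * (1/|x|) := by positivity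
      nlinarith
    · push_neg at h2
      rw [if_neg (not_le.mpr h1), if_neg (by rintro ⟨_, hh⟩; linarith), if_pos h2]
      rw [hHx]
      have hinvx : 1 / |x| ≤ 1 := by
        rw [div_le_one hx']; linarith
      have hN' : N ≤ 2 * a + 2 * a * Real.exp 1 := by
        have : 2 * a / |x| ≤ 2 * a := by
          rw [div_le_iff₀ hx']; nlinarith
        linarith [hN2]
      have step : 1 / (2 * Real.pi) * N ≤
          1/6 * (2 * a + 2 * a * Real.exp 1) := by
        calc 1 / (2 * Real.pi) * N ≤ 1/6 * N := by nlinarith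
          _ ≤ 1/6 * (2 * a + 2 * a * Real.exp 1) := by linarith
      refine step.trans ?_
      have h8 : a * Real.exp 1 ≤ 3 * a := by nlinarith
      linarith
end
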